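/- For every natural number n, parameters u_ℓ = (θ_ℓ, φ_ℓ, λ_ℓ) ∈ ℝ³ for ℓ = 0,…,n−1, every coin value k ∈ ZMod 2, and all n-bit strings J' and J, the matrix entry of the walk operator satisfies: U_{(k,J'),(0,J)} = 0 if k ≠ I_{n−1}, and U_{(k,J'),(0,J)} = ∏_{ℓ=0}^{n−1} [U3(u_ℓ)]_{I_ℓ, I_{ℓ−1}} if k = I_{n−1}, where I := J' ⊕ J and the convention I_{−1} = 0 is used. -/

import Mathlib

/-- The single-qubit rotation gate `U3(θ,φ,λ)`, indexed by `ZMod 2`. -/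
noncomputable def U3 (θ φ lam : ℝ) : Matrix (ZMod 2) (ZMod 2) ℂ :=
  Matrix.of fun μ ν =>
    if μ = 0 then
      (if ν = 0 then (Real.cos (θ / 2) : ℂ)
       else -Complex.exp (Complex.I * lam) * (Real.sin (θ / 2) : ℂ))
    else
      (if ν = 0 then Complex.exp (Complex.I * φ) * (Real.sin (θ / 2) : ℂ)
       else Complex.exp (Complex.I * (lam + φ)) * (Real.cos (θ / 2) : ℂ))

/-- Coin rotation: `U3` acting on the coin qubit, identity on the graph qubits. -/
noncomputable def coinR (n : ℕ) (u : ℝ × ℝ × ℝ) :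
    Matrix (ZMod 2 × (Fin n → ZMod 2)) (ZMod 2 × (Fin n → ZMod 2)) ℂ :=
  Matrix.of fun p q => if p.2 = q.2 then U3 u.1 u.2.1 u.2.2 p.1 q.1 else 0

/-- Controlled flip of the `k`-th graph qubit, controlled by the coin qubit. -/
def flipC (n : ℕ) (k : Fin n) :
    Matrix (ZMod 2 × (Fin n → ZMod 2)) (ZMod 2 × (Fin n → ZMod 2)) ℂ :=
  Matrix.of fun p q =>
    if p.1 = q.1 ∧ p.2 = q.2 + q.1 • (Pi.single k 1 : Fin n → ZMod 2) then 1 else 0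

/-- One quantum-walk evolution `U = W_{n-1} ⋯ W_1 W_0`, where `W_k = C_k · R_k`. -/
noncomputable def walkU (n : ℕ) (u : Fin n → ℝ × ℝ × ℝ) :
    Matrix (ZMod 2 × (Fin n → ZMod 2)) (ZMod 2 × (Fin n → ZMod 2)) ℂ :=
  ((List.finRange n).reverse.map (fun k => flipC n k * coinR n (u k))).prod

/-- The bit `I_{ℓ-1}` of an `n`-bit string, with the convention `I_{-1} = 0`. -/
def prevBit (n : ℕ) (I : Fin n → ZMod 2) (ℓ : Fin n) : ZMod 2 :=
  if 0 < (ℓ : ℕ) then I ⟨(ℓ : ℕ) - 1, lt_of_le_of_lt (Nat.sub_le _ _) ℓ.isLt⟩ else 0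

/-- The bit `I_{n-1}` of an `n`-bit string, with the convention `I_{-1} = 0` (for `n = 0`). -/
def lastBit (n : ℕ) (I : Fin n → ZMod 2) : ZMod 2 :=
  if h : 0 < n then I ⟨n - 1, Nat.sub_lt h Nat.one_pos⟩ else 0

/-!
Starting from `(0, J)`, the factor `W_ℓ` sets the coin to some `c_ℓ` with amplitude
`U3(u_ℓ)_{c_ℓ, c_{ℓ-1}}` and then flips graph bit `ℓ` exactly when `c_ℓ = 1`. A path of coin
values therefore ends in `(c_{n-1}, J + c)`, so the only path reaching `(k, J')` is `c = J' + J`.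
Inductively, the `((k, I + J), (0, J))` entry of `W_{m-1} ⋯ W_0` vanishes unless `I` is zero
from bit `m` on and `k = I_{m-1}`, in which case it is the product of the first `m` amplitudes.
-/

lemma eq_add_iff_eq_add_of_zmod_two {ι : Type*} {x y v : ι → ZMod 2} : x = y + v ↔ y = x + v := by
  simp only [funext_iff, Pi.add_apply]
  exact forall_congr' fun i => by rw [CharTwo.eq_add_iff_add_eq, eq_comm]

lemma Fin.prod_filter_lt_succ {M : Type*} [CommMonoid M] {n m : ℕ} (hm : m < n) (f : Fin n → M) :
    ∏ ℓ ∈ Finset.univ.filter (fun ℓ : Fin n => (ℓ : ℕ) < m + 1), f ℓ =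
      f ⟨m, hm⟩ * ∏ ℓ ∈ Finset.univ.filter (fun ℓ : Fin n => (ℓ : ℕ) < m), f ℓ := by
  have hinsert : Finset.univ.filter (fun ℓ : Fin n => (ℓ : ℕ) < m + 1) =
      insert ⟨m, hm⟩ (Finset.univ.filter (fun ℓ : Fin n => (ℓ : ℕ) < m)) := by
    ext ℓ
    simp only [Finset.mem_filter, Finset.mem_univ, true_and, Finset.mem_insert, Fin.ext_iff]
    omega
  rw [hinsert, Finset.prod_insert (by simp)]

lemma flipC_mul_apply {n : ℕ} (j : Fin n) {ι : Type*}
    (M : Matrix (ZMod 2 × (Fin n → ZMod 2)) ι ℂ) (k : ZMod 2) (J : Fin n → ZMod 2) (q : ι) :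
    (flipC n j * M) (k, J) q = M (k, J + k • Pi.single j 1) q := by
  simp only [Matrix.mul_apply, Fintype.sum_prod_type, flipC, Matrix.of_apply, ite_and, ite_mul,
    one_mul, zero_mul, eq_add_iff_eq_add_of_zmod_two]
  simp

lemma coinR_mul_apply {n : ℕ} (u : ℝ × ℝ × ℝ) {ι : Type*}
    (M : Matrix (ZMod 2 × (Fin n → ZMod 2)) ι ℂ) (k : ZMod 2) (J : Fin n → ZMod 2) (q : ι) :
    (coinR n u * M) (k, J) q = ∑ c, U3 u.1 u.2.1 u.2.2 k c * M (c, J) q := by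
  simp [Matrix.mul_apply, Fintype.sum_prod_type, coinR, ite_mul]

/-- `I_{m-1}` with `I_{-1} = 0`, and the junk value `0` for `m > n`. -/
def bitBefore {n : ℕ} (I : Fin n → ZMod 2) (m : ℕ) : ZMod 2 :=
  if h : 0 < m ∧ m ≤ n then I ⟨m - 1, by omega⟩ else 0

lemma prevBit_eq_bitBefore {n : ℕ} (I : Fin n → ZMod 2) (ℓ : Fin n) :
    prevBit n I ℓ = bitBefore I ℓ := by
  simp only [prevBit, bitBefore, ℓ.isLt.le, and_true]
  split_ifs <;> rfl

lemma lastBit_eq_bitBefore {n : ℕ} (I : Fin n → ZMod 2) : lastBit n I = bitBefore I n := by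
  simp [lastBit, bitBefore]

lemma bitBefore_succ {n : ℕ} (I : Fin n → ZMod 2) {m : ℕ} (hm : m < n) :
    bitBefore I (m + 1) = I ⟨m, hm⟩ := by
  simp [bitBefore, Nat.succ_le_of_lt hm]

lemma bitBefore_add_single {n : ℕ} (I : Fin n → ZMod 2) (j : Fin n) (c : ZMod 2) {m : ℕ}
    (hm : m ≤ j) : bitBefore (I + c • Pi.single j 1) m = bitBefore I m := by
  unfold bitBefore
  split_ifs with h
  · simp only [Pi.add_apply, Pi.smul_apply, Pi.single_apply, Fin.ext_iff, smul_eq_mul, mul_ite,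
      mul_one, mul_zero, add_eq_left, ite_eq_right_iff]
    omega
  · rfl

/-- The partial walk `W_{m-1} ⋯ W_0`. -/
noncomputable def walkPrefix (n : ℕ) (u : Fin n → ℝ × ℝ × ℝ) (m : ℕ) :
    Matrix (ZMod 2 × (Fin n → ZMod 2)) (ZMod 2 × (Fin n → ZMod 2)) ℂ :=
  (((List.finRange n).take m).reverse.map (fun k => flipC n k * coinR n (u k))).prod

lemma walkPrefix_zero (n : ℕ) (u : Fin n → ℝ × ℝ × ℝ) : walkPrefix n u 0 = 1 := by
  simp [walkPrefix]

lemma walkPrefix_succ (n : ℕ) (u : Fin n → ℝ × ℝ × ℝ) {m : ℕ} (hm : m < n) :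
    walkPrefix n u (m + 1) =
      flipC n ⟨m, hm⟩ * coinR n (u ⟨m, hm⟩) * walkPrefix n u m := by
  rw [walkPrefix, walkPrefix, List.take_add_one, List.getElem?_eq_getElem (by simpa using hm)]
  simp

lemma walkPrefix_length (n : ℕ) (u : Fin n → ℝ × ℝ × ℝ) : walkPrefix n u n = walkU n u := by
  rw [walkPrefix, walkU, List.take_of_length_le (by simp)]

lemma forall_le_add_single_eq_zero_iff {n : ℕ} (I : Fin n → ZMod 2) {m : ℕ} (hm : m < n)
    (k : ZMod 2) :
    (∀ ℓ : Fin n, m ≤ ℓ → (I + k • (Pi.single ⟨m, hm⟩ 1 : Fin n → ZMod 2)) ℓ = 0) ↔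
      (∀ ℓ : Fin n, m + 1 ≤ ℓ → I ℓ = 0) ∧ k = I ⟨m, hm⟩ := by
  constructor
  · intro h
    refine ⟨fun ℓ hℓ => ?_, ?_⟩
    · simpa [Pi.single_apply, Fin.ext_iff, (show (ℓ : ℕ) ≠ m by omega)] using h ℓ (by omega)
    · simpa [CharTwo.add_eq_zero, eq_comm] using h ⟨m, hm⟩ le_rfl
  · rintro ⟨h, rfl⟩ ℓ hℓ
    rcases eq_or_lt_of_le hℓ with hℓ | hℓ
    · obtain rfl : ℓ = ⟨m, hm⟩ := Fin.ext hℓ.symm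
      simp [CharTwo.add_self_eq_zero]
    · simpa [Pi.single_apply, Fin.ext_iff, hℓ.ne'] using h ℓ hℓ

lemma walkPrefix_apply_zero (n : ℕ) (u : Fin n → ℝ × ℝ × ℝ) {m : ℕ} (hm : m ≤ n)
    (k : ZMod 2) (I J : Fin n → ZMod 2) :
    walkPrefix n u m (k, I + J) (0, J) =
      if (∀ ℓ : Fin n, m ≤ ℓ → I ℓ = 0) ∧ k = bitBefore I m then
        ∏ ℓ ∈ Finset.univ.filter (fun ℓ : Fin n => (ℓ : ℕ) < m),
          U3 (u ℓ).1 (u ℓ).2.1 (u ℓ).2.2 (I ℓ) (bitBefore I ℓ)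
      else 0 := by
  induction m generalizing k I with
  | zero =>
    simp [walkPrefix_zero, Matrix.one_apply, bitBefore, Prod.ext_iff, funext_iff, and_comm]
  | succ m ih =>
    have hm' : m < n := hm
    have hprefix : ∀ ℓ ∈ Finset.univ.filter (fun ℓ : Fin n => (ℓ : ℕ) < m),
        U3 (u ℓ).1 (u ℓ).2.1 (u ℓ).2.2 ((I + k • (Pi.single ⟨m, hm'⟩ 1 : Fin n → ZMod 2)) ℓ)
            (bitBefore (I + k • Pi.single ⟨m, hm'⟩ 1) ℓ) =
          U3 (u ℓ).1 (u ℓ).2.1 (u ℓ).2.2 (I ℓ) (bitBefore I ℓ) := by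
      intro ℓ hℓ
      simp only [Finset.mem_filter, Finset.mem_univ, true_and] at hℓ
      rw [bitBefore_add_single _ _ _ hℓ.le]
      simp [Fin.ext_iff, hℓ.ne]
    rw [walkPrefix_succ n u hm', Matrix.mul_assoc, flipC_mul_apply, coinR_mul_apply]
    simp only [add_right_comm I J, ih hm'.le, forall_le_add_single_eq_zero_iff,
      bitBefore_add_single _ _ _ le_rfl, Finset.prod_congr rfl hprefix, bitBefore_succ _ hm',
      Fin.prod_filter_lt_succ hm']
    by_cases hk : k = I ⟨m, hm'⟩ <;> simp [hk, ite_and, Finset.sum_ite_eq']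

theorem stmt_9 (n : ℕ) (u : Fin n → ℝ × ℝ × ℝ) (k : ZMod 2) (J' J : Fin n → ZMod 2) :
    walkU n u (k, J') (0, J) =
      if k = lastBit n (J' + J) then
        ∏ ℓ : Fin n,
          U3 (u ℓ).1 (u ℓ).2.1 (u ℓ).2.2 ((J' + J) ℓ) (prevBit n (J' + J) ℓ)
      else 0 := by
  have hJ' : J' = (J' + J) + J := by
    simp [add_assoc, funext_iff, CharTwo.add_self_eq_zero]
  conv_lhs => rw [hJ', ← walkPrefix_length, walkPrefix_apply_zero n u le_rfl]
  simp [lastBit_eq_bitBefore, prevBit_eq_bitBefore]
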